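/- Let ρ₀, ρ₁ be states on H_S and define ω = (1/2)|0⟩⟨0| ⊗ ρ₀ + (1/2)|1⟩⟨1| ⊗ ρ₁ on ℂ² ⊗ H_S. Then for every state σ_A on ℂ² and every state σ_S on H_S, ‖σ_A ⊗ σ_S − ω‖₁ ≥ (1/2)‖ρ₀ − ρ₁‖₁ − 1/2. In particular, if ‖ρ₀ − ρ₁‖₁ ≥ 2 − δ then every product state on ℂ² ⊗ H_S is at least (1−δ)/2-far from ω in trace norm. -/

import Mathlib

open scoped Kronecker ComplexOrder
open Matrix

/-- The trace norm (Schatten 1-norm) of a complex matrix: `Tr √(Xᴴ X)`. -/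
noncomputable def traceNorm {n : Type*} [Fintype n] [DecidableEq n] (X : Matrix n n ℂ) : ℝ :=
  ((((Matrix.posSemidef_conjTranspose_mul_self X).isHermitian.eigenvectorUnitary : Matrix n n ℂ) *
      diagonal (((↑) : ℝ → ℂ) ∘ Real.sqrt ∘ (Matrix.posSemidef_conjTranspose_mul_self X).isHermitian.eigenvalues) *
      (star (Matrix.posSemidef_conjTranspose_mul_self X).isHermitian.eigenvectorUnitary :
        Matrix n n ℂ) : Matrix n n ℂ).trace).re

/-- A quantum state: a positive semidefinite matrix with unit trace. -/
def IsState {n : Type*} [Fintype n] (ρ : Matrix n n ℂ) : Prop :=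
  ρ.PosSemidef ∧ ρ.trace = 1

/-- The outer product `|v⟩⟨v|`. -/
def outer {n : Type*} (v : n → ℂ) : Matrix n n ℂ :=
  Matrix.of fun i j => v i * star (v j)

/-- A unit vector. -/
def IsUnitVec {n : Type*} [Fintype n] (v : n → ℂ) : Prop :=
  ∑ i, star (v i) * v i = 1

/-- A bipartite separable state: a finite convex combination of tensor products of states. -/
def SeparableState {a b : Type*} [Fintype a] [Fintype b]
    (σ : Matrix (a × b) (a × b) ℂ) : Prop :=
  ∃ (m : ℕ) (p : Fin m → ℝ) (σA : Fin m → Matrix a a ℂ) (σB : Fin m → Matrix b b ℂ),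
    (∀ y, 0 ≤ p y) ∧ (∑ y, p y = 1) ∧ (∀ y, IsState (σA y)) ∧ (∀ y, IsState (σB y)) ∧
    σ = ∑ y, (p y : ℂ) • (σA y ⊗ₖ σB y)

/-- A maximally entangled unit vector `(1/√d) Σ_k |e_k⟩ ⊗ |f_k⟩` built from two
orthonormal bases `e`, `f` of `ℂ^d`. -/
def MaxEntangled {d : ℕ} (φ : Fin d × Fin d → ℂ) : Prop :=
  ∃ e f : Fin d → Fin d → ℂ,
    (∀ i j, ∑ x, star (e i x) * e j x = if i = j then (1 : ℂ) else 0) ∧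
    (∀ i j, ∑ x, star (f i x) * f j x = if i = j then (1 : ℂ) else 0) ∧
    ∀ x, φ x = ((Real.sqrt d : ℂ))⁻¹ * ∑ k, e k x.1 * f k x.2

/-!
The trace norm is dual to the operator norm: for Hermitian `X` and `-1 ≤ M ≤ 1`,
`|Re Tr (M X)| ≤ ‖X‖₁`, with equality when `M` is the sign of `X`. Test
`X = σ_A ⊗ σ_S - ω` against `Z ⊗ 1` and `Z ⊗ T`, where `Z = diag(1, -1)` and `T` is the sign
of `ρ₀ - ρ₁`. With `x = Tr (Z σ_A)` and `t = Tr (T σ_S) ∈ [-1, 1]` this gives `‖X‖₁ ≥ |x|` and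
`‖X‖₁ ≥ ‖ρ₀ - ρ₁‖₁ / 2 - x t ≥ ‖ρ₀ - ρ₁‖₁ / 2 - |x|`. If `|x| ≥ 1/2` the first bound suffices,
since `‖ρ₀ - ρ₁‖₁ ≤ 2`; otherwise the second one does.
-/

open scoped MatrixOrder

theorem star_right_conjugate_mem_Icc_neg_one_one {R : Type*} [Ring R] [PartialOrder R]
    [StarRing R] [StarOrderedRing R] {u a : R} (hu : u ∈ unitary R)
    (ha : a ∈ Set.Icc (-1) 1) : u * a * star u ∈ Set.Icc (-1) 1 := by
  constructor
  · simpa [Unitary.mul_star_self_of_mem hu] using star_right_conjugate_le_conjugate ha.1 u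
  · simpa [Unitary.mul_star_self_of_mem hu] using star_right_conjugate_le_conjugate ha.2 u

namespace Matrix

variable {n m : Type*}

theorem diagonal_ofReal_mem_Icc [DecidableEq n] {c : n → ℝ} (hc : ∀ i, |c i| ≤ 1) :
    diagonal (fun i => (c i : ℂ)) ∈ Set.Icc (-1) 1 := by
  constructor <;>
  · simp only [le_iff, ← diagonal_one, diagonal_neg, diagonal_sub, posSemidef_diagonal_iff]
    intro i
    have := abs_le.mp (hc i)
    simp only [Complex.nonneg_iff, Complex.sub_re, Complex.sub_im, Complex.ofReal_re,
      Complex.ofReal_im, Complex.neg_re, Complex.neg_im, Complex.one_re, Complex.one_im]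
    constructor <;> linarith

theorem kronecker_mem_Icc [Fintype n] [DecidableEq n] [Fintype m] [DecidableEq m]
    {X : Matrix n n ℂ} {Y : Matrix m m ℂ} (hX : X ∈ Set.Icc (-1) 1) (hY : Y ∈ Set.Icc (-1) 1) :
    X ⊗ₖ Y ∈ Set.Icc (-1) 1 := by
  have hX₁ : (1 + X).PosSemidef := by simpa [le_iff, add_comm] using hX.1
  have hX₂ : (1 - X).PosSemidef := hX.2
  have hY₁ : (1 + Y).PosSemidef := by simpa [le_iff, add_comm] using hY.1
  have hY₂ : (1 - Y).PosSemidef := hY.2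
  have half : (0 : ℂ) ≤ 1 / 2 := Complex.nonneg_iff.mpr ⟨by norm_num, by norm_num⟩
  -- `1 ± X ⊗ Y = ((1 + X) ⊗ (1 ± Y) + (1 - X) ⊗ (1 ∓ Y)) / 2`
  constructor <;> rw [le_iff]
  · convert ((hX₁.kronecker hY₁).add (hX₂.kronecker hY₂)).smul half using 1
    ext ⟨i, k⟩ ⟨j, l⟩
    simp [one_apply, Prod.ext_iff, ite_and]
    split_ifs <;> ring
  · convert ((hX₁.kronecker hY₂).add (hX₂.kronecker hY₁)).smul half using 1
    ext ⟨i, k⟩ ⟨j, l⟩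
    simp [one_apply, Prod.ext_iff, ite_and]
    split_ifs <;> ring

theorem abs_re_apply_self_le_one [DecidableEq n] {M : Matrix n n ℂ}
    (hM : M ∈ Set.Icc (-1) 1) (i : n) : |(M i i).re| ≤ 1 := by
  have h₁ := Complex.nonneg_iff.mp (hM.1.diag_nonneg (i := i))
  have h₂ := Complex.nonneg_iff.mp (hM.2.diag_nonneg (i := i))
  simp only [sub_apply, neg_apply, one_apply_eq, Complex.sub_re, Complex.neg_re,
    Complex.one_re] at h₁ h₂
  exact abs_le.mpr ⟨by linarith [h₁.1], by linarith [h₂.1]⟩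

theorem IsHermitian.im_trace_mul_eq_zero [Fintype n] {M A : Matrix n n ℂ} (hM : M.IsHermitian)
    (hA : A.IsHermitian) : (M * A).trace.im = 0 := by
  rw [← Complex.conj_eq_iff_im, ← Complex.star_def, ← trace_conjTranspose, conjTranspose_mul,
    hA.eq, hM.eq, trace_mul_comm]

theorem IsHermitian.trace_cfc [Fintype n] [DecidableEq n] {A : Matrix n n ℂ}
    (hA : A.IsHermitian) (f : ℝ → ℝ) : (cfc f A).trace = ∑ i, (f (hA.eigenvalues i) : ℂ) := by
  rw [hA.cfc_eq, IsHermitian.cfc, Unitary.conjStarAlgAut_apply, trace_mul_cycle,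
    Unitary.coe_star_mul_self, one_mul, trace_diagonal]
  rfl

end Matrix

section TraceNorm

variable {n : Type*} [Fintype n] [DecidableEq n]

theorem traceNorm_eq_re_trace_cfc_sqrt (X : Matrix n n ℂ) :
    traceNorm X = (cfc Real.sqrt (Xᴴ * X)).trace.re := by
  rw [(posSemidef_conjTranspose_mul_self X).isHermitian.cfc_eq]
  rfl

theorem Matrix.IsHermitian.traceNorm_eq_sum_abs_eigenvalues {A : Matrix n n ℂ}
    (hA : A.IsHermitian) : traceNorm A = ∑ i, |hA.eigenvalues i| := by
  have hsq : Aᴴ * A = cfc (fun x : ℝ => x * x) A := by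
    rw [cfc_mul (fun x : ℝ => x) (fun x : ℝ => x) A, cfc_id' ℝ A, hA.eq]
  rw [traceNorm_eq_re_trace_cfc_sqrt, hsq, ← cfc_comp Real.sqrt (fun x : ℝ => x * x) A,
    hA.trace_cfc, Complex.re_sum]
  simp [Real.sqrt_mul_self_eq_abs]

theorem IsState.traceNorm_eq_one {ρ : Matrix n n ℂ} (hρ : IsState ρ) : traceNorm ρ = 1 := by
  have hsum : ∑ i, hρ.1.isHermitian.eigenvalues i = 1 := by
    simpa using congrArg Complex.re (hρ.1.isHermitian.trace_eq_sum_eigenvalues.symm.trans hρ.2)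
  rw [hρ.1.isHermitian.traceNorm_eq_sum_abs_eigenvalues, ← hsum]
  exact Finset.sum_congr rfl fun i _ => abs_of_nonneg (hρ.1.eigenvalues_nonneg i)

theorem abs_re_trace_mul_le_traceNorm {M A : Matrix n n ℂ} (hM : M ∈ Set.Icc (-1) 1)
    (hA : A.IsHermitian) : |(M * A).trace.re| ≤ traceNorm A := by
  set U : Matrix n n ℂ := (hA.eigenvectorUnitary : Matrix n n ℂ)
  have hB : star U * M * U ∈ Set.Icc (-1) 1 := by
    simpa using star_right_conjugate_mem_Icc_neg_one_one
      (Unitary.star_mem hA.eigenvectorUnitary.2) hM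
  have htrace : (M * A).trace = ∑ i, (star U * M * U) i i * hA.eigenvalues i := by
    conv_lhs => rw [hA.spectral_theorem, Unitary.conjStarAlgAut_apply]
    rw [← mul_assoc, ← mul_assoc, trace_mul_comm, ← mul_assoc, ← mul_assoc]
    simp only [trace, diag, mul_diagonal, U]
    rfl
  rw [hA.traceNorm_eq_sum_abs_eigenvalues, htrace, Complex.re_sum]
  refine (Finset.abs_sum_le_sum_abs _ _).trans (Finset.sum_le_sum fun i _ => ?_)
  rw [Complex.re_mul_ofReal, abs_mul]
  exact mul_le_of_le_one_left (abs_nonneg _) (abs_re_apply_self_le_one hB i)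

theorem Matrix.IsHermitian.exists_mem_Icc_trace_mul_eq_traceNorm {A : Matrix n n ℂ}
    (hA : A.IsHermitian) : ∃ T ∈ Set.Icc (-1 : Matrix n n ℂ) 1, (T * A).trace = traceNorm A := by
  have hcont (f : ℝ → ℝ) : ContinuousOn f (spectrum ℝ A) := finite_real_spectrum.continuousOn f
  refine ⟨cfc (fun x : ℝ => (SignType.sign x : ℝ)) A, ⟨?_, ?_⟩, ?_⟩
  · simpa using algebraMap_le_cfc _ (-1 : ℝ) A (fun x _ => by
      rcases lt_trichotomy x 0 with h | h | h <;> simp [h]) (hcont _)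
  · exact cfc_le_one _ A fun x _ => by
      rcases lt_trichotomy x 0 with h | h | h <;> simp [h]
  · have hmul := cfc_mul (fun x : ℝ => (SignType.sign x : ℝ)) id A (hcont _) (hcont _)
    rw [cfc_id ℝ A] at hmul
    rw [← hmul, hA.trace_cfc, hA.traceNorm_eq_sum_abs_eigenvalues]
    simp

theorem exists_mem_Icc_re_trace_mul_sub_re_trace_mul_eq_traceNorm_sub {ρ₀ ρ₁ : Matrix n n ℂ}
    (h0 : ρ₀.IsHermitian) (h1 : ρ₁.IsHermitian) :
    ∃ T ∈ Set.Icc (-1 : Matrix n n ℂ) 1,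
      (T * ρ₀).trace.re - (T * ρ₁).trace.re = traceNorm (ρ₀ - ρ₁) := by
  obtain ⟨T, hT, hTD⟩ := (h0.sub h1).exists_mem_Icc_trace_mul_eq_traceNorm
  exact ⟨T, hT, by rw [← Complex.sub_re, ← trace_sub, ← mul_sub, hTD, Complex.ofReal_re]⟩

theorem IsState.abs_re_trace_mul_le_one {M ρ : Matrix n n ℂ} (hM : M ∈ Set.Icc (-1) 1)
    (hρ : IsState ρ) : |(M * ρ).trace.re| ≤ 1 :=
  hρ.traceNorm_eq_one ▸ abs_re_trace_mul_le_traceNorm hM hρ.1.isHermitian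

theorem traceNorm_sub_le_two {ρ₀ ρ₁ : Matrix n n ℂ} (h0 : IsState ρ₀) (h1 : IsState ρ₁) :
    traceNorm (ρ₀ - ρ₁) ≤ 2 := by
  obtain ⟨T, hT, hTD⟩ :=
    exists_mem_Icc_re_trace_mul_sub_re_trace_mul_eq_traceNorm_sub h0.1.isHermitian h1.1.isHermitian
  linarith [(abs_le.mp (h0.abs_re_trace_mul_le_one hT)).2,
    (abs_le.mp (h1.abs_re_trace_mul_le_one hT)).1]

end TraceNorm

noncomputable def cqState {S : Type*} (ρ₀ ρ₁ : Matrix S S ℂ) : Matrix (Fin 2 × S) (Fin 2 × S) ℂ :=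
  (1 / 2 : ℂ) • ((!![1, 0; 0, 0] : Matrix (Fin 2) (Fin 2) ℂ) ⊗ₖ ρ₀)
    + (1 / 2 : ℂ) • ((!![0, 0; 0, 1] : Matrix (Fin 2) (Fin 2) ℂ) ⊗ₖ ρ₁)

def pauliZ : Matrix (Fin 2) (Fin 2) ℂ := !![1, 0; 0, -1]

theorem pauliZ_mem_Icc : pauliZ ∈ Set.Icc (-1) 1 := by
  convert diagonal_ofReal_mem_Icc (c := ![1, -1]) (by simp [Fin.forall_fin_two])
  ext i j
  fin_cases i <;> fin_cases j <;> simp [pauliZ]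

theorem pauliZ_isHermitian : pauliZ.IsHermitian := by
  ext i j
  fin_cases i <;> fin_cases j <;> simp [pauliZ]

theorem cqState_isHermitian {S : Type*} {ρ₀ ρ₁ : Matrix S S ℂ} (h0 : ρ₀.IsHermitian)
    (h1 : ρ₁.IsHermitian) : (cqState ρ₀ ρ₁).IsHermitian := by
  have hP₀ : (!![1, 0; 0, 0] : Matrix (Fin 2) (Fin 2) ℂ).IsHermitian := by
    ext i j
    fin_cases i <;> fin_cases j <;> simp
  have hP₁ : (!![0, 0; 0, 1] : Matrix (Fin 2) (Fin 2) ℂ).IsHermitian := by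
    ext i j
    fin_cases i <;> fin_cases j <;> simp
  simp [cqState, IsHermitian, conjTranspose_kronecker, h0.eq, h1.eq, hP₀.eq, hP₁.eq]

theorem trace_pauliZ_kronecker_mul_kronecker_sub_cqState {S : Type*} [Fintype S]
    (σA : Matrix (Fin 2) (Fin 2) ℂ) (B σS ρ₀ ρ₁ : Matrix S S ℂ) :
    ((pauliZ ⊗ₖ B) * (σA ⊗ₖ σS - cqState ρ₀ ρ₁)).trace
      = (pauliZ * σA).trace * (B * σS).trace - ((B * ρ₀).trace - (B * ρ₁).trace) / 2 := by
  simp [cqState, mul_sub, mul_add, ← mul_kronecker_mul, trace_kronecker, pauliZ, trace_fin_two]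
  ring

theorem le_traceNorm_kronecker_sub_cqState {S : Type*} [Fintype S] [DecidableEq S]
    {σA : Matrix (Fin 2) (Fin 2) ℂ} {σS ρ₀ ρ₁ : Matrix S S ℂ} (hA : IsState σA)
    (hS : IsState σS) (h0 : IsState ρ₀) (h1 : IsState ρ₁) :
    1 / 2 * traceNorm (ρ₀ - ρ₁) - 1 / 2 ≤ traceNorm (σA ⊗ₖ σS - cqState ρ₀ ρ₁) := by
  set N := traceNorm (σA ⊗ₖ σS - cqState ρ₀ ρ₁)
  set x := (pauliZ * σA).trace.re
  have hX : (σA ⊗ₖ σS - cqState ρ₀ ρ₁).IsHermitian :=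
    (hA.1.kronecker hS.1).isHermitian.sub (cqState_isHermitian h0.1.isHermitian h1.1.isHermitian)
  have hx : (pauliZ * σA).trace = x := by
    conv_lhs => rw [← Complex.re_add_im (pauliZ * σA).trace,
      pauliZ_isHermitian.im_trace_mul_eq_zero hA.1.isHermitian]
    simp [x]
  have htest {B : Matrix S S ℂ} (hB : B ∈ Set.Icc (-1) 1) :
      |x * (B * σS).trace.re - ((B * ρ₀).trace.re - (B * ρ₁).trace.re) / 2| ≤ N := by
    have := abs_re_trace_mul_le_traceNorm (kronecker_mem_Icc pauliZ_mem_Icc hB) hX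
    rw [trace_pauliZ_kronecker_mul_kronecker_sub_cqState, hx] at this
    simpa using this
  have hxN : |x| ≤ N := by
    simpa [hS.2, h0.2, h1.2] using htest (B := 1) ⟨neg_le_self zero_le_one, le_rfl⟩
  obtain ⟨T, hT, hTD⟩ :=
    exists_mem_Icc_re_trace_mul_sub_re_trace_mul_eq_traceNorm_sub h0.1.isHermitian h1.1.isHermitian
  have hxtN := hTD ▸ htest hT
  have hxt : x * (T * σS).trace.re ≤ |x| := by
    refine (le_abs_self _).trans ?_
    rw [abs_mul]
    exact mul_le_of_le_one_right (abs_nonneg x) (hS.abs_re_trace_mul_le_one hT)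
  have hD := traceNorm_sub_le_two h0 h1
  rcases le_or_gt |x| (1 / 2) with hsmall | hlarge
  · linarith [(abs_le.mp hxtN).1]
  · linarith

/-- For states `ρ₀, ρ₁` on `H_S` and
`ω = (1/2)|0⟩⟨0| ⊗ ρ₀ + (1/2)|1⟩⟨1| ⊗ ρ₁` on `ℂ² ⊗ H_S`, every product state
`σ_A ⊗ σ_S` satisfies `‖σ_A ⊗ σ_S − ω‖₁ ≥ (1/2)‖ρ₀ − ρ₁‖₁ − 1/2`. In particular, if
`‖ρ₀ − ρ₁‖₁ ≥ 2 − δ` then every product state is at least `(1−δ)/2`-far from `ω`. -/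
theorem stmt12 {S : Type*} [Fintype S] [DecidableEq S]
    (ρ₀ ρ₁ : Matrix S S ℂ) (h0 : IsState ρ₀) (h1 : IsState ρ₁)
    (ω : Matrix (Fin 2 × S) (Fin 2 × S) ℂ)
    (hω : ω = (1 / 2 : ℂ) • ((!![1, 0; 0, 0] : Matrix (Fin 2) (Fin 2) ℂ) ⊗ₖ ρ₀)
        + (1 / 2 : ℂ) • ((!![0, 0; 0, 1] : Matrix (Fin 2) (Fin 2) ℂ) ⊗ₖ ρ₁)) :
    (∀ (σA : Matrix (Fin 2) (Fin 2) ℂ) (σS : Matrix S S ℂ), IsState σA → IsState σS →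
      1 / 2 * traceNorm (ρ₀ - ρ₁) - 1 / 2 ≤ traceNorm (σA ⊗ₖ σS - ω)) ∧
    (∀ δ : ℝ, 2 - δ ≤ traceNorm (ρ₀ - ρ₁) →
      ∀ (σA : Matrix (Fin 2) (Fin 2) ℂ) (σS : Matrix S S ℂ), IsState σA → IsState σS →
        (1 - δ) / 2 ≤ traceNorm (σA ⊗ₖ σS - ω)) := by
  have hbound (σA : Matrix (Fin 2) (Fin 2) ℂ) (σS : Matrix S S ℂ) (hA : IsState σA)
      (hS : IsState σS) : 1 / 2 * traceNorm (ρ₀ - ρ₁) - 1 / 2 ≤ traceNorm (σA ⊗ₖ σS - ω) :=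
    hω ▸ le_traceNorm_kronecker_sub_cqState hA hS h0 h1
  exact ⟨hbound, fun δ hδ σA σS hA hS => by linarith [hbound σA σS hA hS]⟩
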